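/- Existence of inverses (second part of Lemma 7.2): Let {π⁽ⁿ⁾}_{n ∈ ℕ²} ⊂ ℝ[[z_k,z_n]] satisfy the population condition, with associated re-expansion map Γ*. Then there exists a family {π̃⁽ⁿ⁾}_{n ∈ ℕ²} ⊂ ℝ[[z_k,z_n]] satisfying the population condition π̃⁽ⁿ⁾_β = 0 unless |n| < |β|, such that Γ*(π̃⁽ⁿ⁾) = −π⁽ⁿ⁾ for every n ∈ ℕ², and the re-expansion map Γ̃* associated to {π̃⁽ⁿ⁾} is a two-sided inverse of Γ*: Γ* ∘ Γ̃* = Γ̃* ∘ Γ* = id on ℝ[[z_k,z_n]]. -/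

import Mathlib

open MvPowerSeries

noncomputable section

/-- Indices `n ∈ ℕ² \ {(0,0)}` for the variables `z_n`. -/
abbrev Pos2 : Type := {p : ℕ × ℕ // p ≠ (0, 0)}

/-- The variables: `z_k` for `k ∈ ℕ` (left) and `z_n` for `n ∈ ℕ²\{0}` (right). -/
abbrev Var : Type := ℕ ⊕ Pos2

/-- Multi-indices: finitely supported functions from the variables to ℕ. -/
abbrev MIdx : Type := Var →₀ ℕ

/-- The algebra ℝ[[z_k, z_n]] of formal power series. -/
abbrev FPS : Type := MvPowerSeries Var ℝ

/-- The variable `z_k` as a power series. -/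
def zk (k : ℕ) : FPS := MvPowerSeries.X (Sum.inl k)

/-- The variable `z_n` as a power series. -/
def zn (n : Pos2) : FPS := MvPowerSeries.X (Sum.inr n)

/-- The derivation `D⁽⁰⁾ = Σ_k (k+1) z_{k+1} ∂_{z_k}`, defined componentwise by
`(D⁽⁰⁾π)_β = Σ_{k, β(k+1) ≥ 1} (k+1)(β(k)+1) π_{β + e_k - e_{k+1}}`. -/
def Dzero (π : FPS) : FPS := fun β =>
  ∑ j ∈ β.support,
    (match j with
     | Sum.inl (k + 1) =>
         ((k : ℝ) + 1) * ((β (Sum.inl k) : ℝ) + 1) *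
           MvPowerSeries.coeff
             (β + Finsupp.single (Sum.inl k) 1 - Finsupp.single (Sum.inl (k + 1)) 1) π
     | _ => 0)

/-- `c ∈ ℝ[[z_k]]`: the subalgebra of series with no `z_n`-dependence. -/
def OnlyZk (c : FPS) : Prop :=
  ∀ β : MIdx, (∃ n : Pos2, β (Sum.inr n) ≠ 0) → MvPowerSeries.coeff β c = 0

/-- `[β] := Σ_k k β(k) − Σ_n β(n)`. -/
def bracketZ (β : MIdx) : ℤ :=
  β.sum fun j m => (match j with | Sum.inl k => (k : ℤ) | Sum.inr _ => -1) * (m : ℤ)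

/-- `|β|_p := Σ_n |n| β(n)` where `|n| = n₁ + 2 n₂`. -/
def homP (β : MIdx) : ℝ :=
  β.sum fun j m =>
    (match j with | Sum.inl _ => (0 : ℝ) | Sum.inr n => (n.val.1 : ℝ) + 2 * n.val.2) * (m : ℝ)

/-- The homogeneity `|β| := α (1 + [β]) + |β|_p`. -/
def hom (α : ℝ) (β : MIdx) : ℝ := α * (1 + (bracketZ β : ℝ)) + homP β

/-- `|β|_≺ := |β| + λ β(0)`; the ordering is `γ ≺ β iff |γ|_≺ < |β|_≺`. -/
def ordP (α lam : ℝ) (β : MIdx) : ℝ := hom α β + lam * (β (Sum.inl 0) : ℝ)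

/-- Row-finiteness of a matrix indexed by pairs of multi-indices. -/
def RowFinite (Γ : MIdx → MIdx → ℝ) : Prop := ∀ β : MIdx, {γ : MIdx | Γ β γ ≠ 0}.Finite

/-- The linear map induced componentwise by a (row-finite) matrix. -/
def applyG (Γ : MIdx → MIdx → ℝ) (π : FPS) : FPS := fun β =>
  ∑ᶠ γ : MIdx, Γ β γ * MvPowerSeries.coeff γ π

/-- The prescribed image of `z_k`: `Σ_{l≥0} (k+l choose k) q^l z_{k+l}`, defined
componentwise (only finitely many `l` contribute to each component). -/
def gammaZk (q : FPS) (k : ℕ) : FPS := fun β =>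
  ∑ᶠ l : ℕ, (((k + l).choose k : ℝ)) * MvPowerSeries.coeff β (q ^ l * zk (k + l))

/-- The population condition `π⁽ⁿ⁾_β = 0 unless |n| < |β|`. -/
def PopCond (α : ℝ) (pin : ℕ × ℕ → FPS) : Prop :=
  ∀ (n : ℕ × ℕ) (β : MIdx),
    MvPowerSeries.coeff β (pin n) ≠ 0 → ((n.1 : ℝ) + 2 * n.2) < hom α β

/-- `Γ` is the re-expansion matrix associated to the family `{π⁽ⁿ⁾}_{n ∈ ℕ²}`:
row-finite, the induced map is a unital algebra endomorphism, and it maps the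
coordinates `z_k`, `z_n` as prescribed. -/
def IsReExpansion (pin : ℕ × ℕ → FPS) (Γ : MIdx → MIdx → ℝ) : Prop :=
  RowFinite Γ ∧
  (∀ π π' : FPS, applyG Γ (π * π') = applyG Γ π * applyG Γ π') ∧
  applyG Γ 1 = 1 ∧
  (∀ k : ℕ, applyG Γ (zk k) = gammaZk (pin (0, 0)) k) ∧
  (∀ n : Pos2, applyG Γ (zn n) = zn n + pin n.val)

/-!
Put `deg α β := |β| - α`, an additive, nonnegative degree on multi-indices that takes only
finitely many values below any bound. The prescribed images of the coordinates have the form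
`Γ* z_v = z_v + (terms of higher degree)` (for `z_n` this is the population condition), and by
multiplicativity the same holds for every monomial: the matrix of `Γ*` is unitriangular for `deg`.
Hence `(Γ* - id)^j` vanishes on row `β` as soon as `j` exceeds the number of degrees below
`deg β`, the Neumann series `Γ̃* = Σ_j (id - Γ*)^j` is a row-finite right inverse of `Γ*`, and
unitriangularity makes `Γ*` injective, so `Γ̃*` is a two-sided inverse and an algebra map.
Its values on `z_n` define `π̃⁽ⁿ⁾`; on `z_k` it is the shift by `π̃⁽⁰⁾`, because the shifts by
`π⁽⁰⁾` and by `-π⁽⁰⁾` cancel, which is checked coefficientwise on finite truncations.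
-/

open Finset

/-- `deg α β = |β| - α`, which unlike `|β|` is additive in `β`. -/
def degWeight (α : ℝ) : Var → ℝ
  | .inl k => α * k
  | .inr n => (n.val.1 : ℝ) + 2 * n.val.2 - α

def deg (α : ℝ) : MIdx →+ ℝ := Finsupp.weight (degWeight α)

lemma deg_single_one (α : ℝ) (v : Var) : deg α (Finsupp.single v 1) = degWeight α v := by
  simp [deg, Finsupp.weight_single]

lemma hom_eq_add_deg (α : ℝ) (β : MIdx) : hom α β = α + deg α β := by
  simp only [hom, bracketZ, homP, deg, Finsupp.weight_apply, Finsupp.sum, Int.cast_sum,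
    Int.cast_mul, Int.cast_natCast, nsmul_eq_mul, mul_add, mul_one, Finset.mul_sum, add_assoc,
    ← Finset.sum_add_distrib]
  congr 1
  refine Finset.sum_congr rfl fun v _ => ?_
  rcases v with k | n <;> simp only [degWeight] <;> push_cast <;> ring

lemma one_le_fst_add_two_mul_snd (n : Pos2) : 1 ≤ n.val.1 + 2 * n.val.2 := by
  obtain ⟨⟨a, b⟩, hn⟩ := n
  dsimp only
  by_contra h
  exact hn (Prod.ext (by dsimp only; omega) (by dsimp only; omega))

lemma degWeight_nonneg {α : ℝ} (hα0 : 0 < α) (hα1 : α < 1) (v : Var) : 0 ≤ degWeight α v := by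
  rcases v with k | n
  · exact mul_nonneg hα0.le k.cast_nonneg
  · have : (1 : ℝ) ≤ n.val.1 + 2 * n.val.2 := by exact_mod_cast one_le_fst_add_two_mul_snd n
    simp only [degWeight]
    linarith

lemma deg_nonneg {α : ℝ} (hα0 : 0 < α) (hα1 : α < 1) (β : MIdx) : 0 ≤ deg α β := by
  simp only [deg, Finsupp.weight_apply, Finsupp.sum]
  exact Finset.sum_nonneg fun v _ => nsmul_nonneg (degWeight_nonneg hα0 hα1 v) _

def kWeight : Var → ℕ
  | .inl k => k
  | .inr _ => 0

def cWeight : Var → ℕ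
  | .inl _ => 0
  | .inr _ => 1

def pWeight : Var → ℕ
  | .inl _ => 0
  | .inr n => n.val.1 + 2 * n.val.2

lemma deg_eq (α : ℝ) (β : MIdx) :
    deg α β = α * Finsupp.weight kWeight β + Finsupp.weight pWeight β
      - α * Finsupp.weight cWeight β := by
  simp only [deg, Finsupp.weight_apply, Finsupp.sum, Nat.cast_sum, Finset.mul_sum,
    ← Finset.sum_add_distrib, ← Finset.sum_sub_distrib, smul_eq_mul, nsmul_eq_mul, Nat.cast_mul]
  refine Finset.sum_congr rfl fun v _ => ?_
  rcases v with k | n <;> simp only [degWeight, kWeight, cWeight, pWeight] <;> push_cast <;> ring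

lemma weight_cWeight_le_weight_pWeight (β : MIdx) :
    Finsupp.weight cWeight β ≤ Finsupp.weight pWeight β := by
  simp only [Finsupp.weight_apply, Finsupp.sum]
  refine Finset.sum_le_sum fun v _ => Nat.mul_le_mul_left _ ?_
  rcases v with k | n
  · exact le_rfl
  · exact one_le_fst_add_two_mul_snd n

/-- Infinitely many multi-indices have degree below `D` (`z_0` has degree `0`), but only
finitely many degrees occur there. -/
lemma finite_deg_image_lt {α : ℝ} (hα0 : 0 < α) (hα1 : α < 1) (D : ℝ) :
    (deg α '' {δ | deg α δ < D}).Finite := by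
  set B := ⌊D / (1 - α)⌋₊
  let f : ℕ × ℕ × ℕ → ℝ := fun x => α * x.1 + x.2.2 - α * x.2.1
  refine ((Set.finite_Iic ⌊D / α⌋₊).prod
    ((Set.finite_Iic B).prod (Set.finite_Iic B))).image f |>.subset ?_
  rintro _ ⟨δ, hδ, rfl⟩
  have hCP : (Finsupp.weight cWeight δ : ℝ) ≤ Finsupp.weight pWeight δ := by
    exact_mod_cast weight_cWeight_le_weight_pWeight δ
  have hK : (0 : ℝ) ≤ Finsupp.weight kWeight δ := Nat.cast_nonneg _
  have hC : (0 : ℝ) ≤ Finsupp.weight cWeight δ := Nat.cast_nonneg _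
  simp only [Set.mem_ofPred_eq, deg_eq] at hδ
  have hP : (Finsupp.weight pWeight δ : ℝ) ≤ D / (1 - α) := by
    rw [le_div_iff₀ (by linarith)]; nlinarith
  refine ⟨(Finsupp.weight kWeight δ, Finsupp.weight cWeight δ, Finsupp.weight pWeight δ),
    ⟨?_, ?_, ?_⟩, (deg_eq α δ).symm⟩
  · refine Nat.le_floor ?_
    rw [le_div_iff₀ hα0]; nlinarith
  · exact Nat.le_floor (hCP.trans hP)
  · exact Nat.le_floor hP

/-- A natural-number proxy for the degree (`degRank_lt_degRank_iff`), used for induction. -/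
def degRank (α : ℝ) (β : MIdx) : ℕ := (deg α '' {δ | deg α δ < deg α β}).ncard

lemma degRank_lt_degRank_iff {α : ℝ} (hα0 : 0 < α) (hα1 : α < 1) {β γ : MIdx} :
    degRank α γ < degRank α β ↔ deg α γ < deg α β := by
  constructor
  · intro h
    by_contra hle
    refine (Set.ncard_le_ncard ?_ (finite_deg_image_lt hα0 hα1 _)).not_gt h
    rintro _ ⟨δ, hδ, rfl⟩
    exact ⟨δ, lt_of_lt_of_le hδ (not_lt.mp hle), rfl⟩
  · intro h
    refine Set.ncard_lt_ncard ⟨?_, fun hsub => ?_⟩ (finite_deg_image_lt hα0 hα1 _)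
    · rintro _ ⟨δ, hδ, rfl⟩
      exact ⟨δ, hδ.trans h, rfl⟩
    · obtain ⟨δ, hδ, hδγ⟩ := hsub ⟨γ, h, rfl⟩
      exact (hδγ ▸ hδ : deg α γ < deg α γ).false

lemma degRank_le_degRank_iff {α : ℝ} (hα0 : 0 < α) (hα1 : α < 1) {β γ : MIdx} :
    degRank α γ ≤ degRank α β ↔ deg α γ ≤ deg α β := by
  simpa only [not_lt] using (degRank_lt_degRank_iff hα0 hα1 (β := γ) (γ := β)).not

section EqUpToDeg

variable {α D : ℝ}

/-- In particular `EqUpToDeg α (deg α γ) π (monomial γ 1)` says that `π = z^γ + (terms of higher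
degree)`. -/
def EqUpToDeg (α D : ℝ) (π π' : FPS) : Prop := ∀ γ, deg α γ ≤ D → coeff γ π = coeff γ π'

lemma EqUpToDeg.mul_left (hα0 : 0 < α) (hα1 : α < 1) {π π' : FPS} (h : EqUpToDeg α D π π')
    (ρ : FPS) : EqUpToDeg α D (ρ * π) (ρ * π') := by
  intro β hβ
  rw [coeff_mul, coeff_mul]
  refine Finset.sum_congr rfl fun p hp => ?_
  rw [← mem_antidiagonal.mp hp, map_add] at hβ
  rw [h p.2 (by linarith [deg_nonneg hα0 hα1 p.1])]

lemma coeff_monomial_one_of_deg_lt {β γ : MIdx} (h : deg α β < deg α γ) :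
    coeff β (monomial γ (1 : ℝ)) = 0 := by
  classical
  rw [coeff_monomial, if_neg (by rintro rfl; exact h.false)]

lemma EqUpToDeg.coeff_of_deg_lt {γ β : MIdx} {π : FPS}
    (h : EqUpToDeg α (deg α γ) π (monomial γ 1)) (hβ : deg α β < deg α γ) : coeff β π = 0 := by
  rw [h β hβ.le, coeff_monomial_one_of_deg_lt hβ]

lemma EqUpToDeg.mul_monomial {γ γ' : MIdx} {π π' : FPS}
    (h : EqUpToDeg α (deg α γ) π (monomial γ 1)) (h' : EqUpToDeg α (deg α γ') π' (monomial γ' 1)) :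
    EqUpToDeg α (deg α (γ + γ')) (π * π') (monomial (γ + γ') 1) := by
  intro β hβ
  rw [← mul_one (1 : ℝ), ← monomial_mul_monomial, coeff_mul, coeff_mul]
  refine Finset.sum_congr rfl fun p hp => ?_
  rw [← mem_antidiagonal.mp hp, map_add, map_add] at hβ
  by_cases h1 : deg α γ < deg α p.1
  · have h2 : deg α p.2 < deg α γ' := by linarith
    rw [h'.coeff_of_deg_lt h2, coeff_monomial_one_of_deg_lt h2, mul_zero, mul_zero]
  by_cases h2 : deg α γ' < deg α p.2
  · have h1 : deg α p.1 < deg α γ := by linarith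
    rw [h.coeff_of_deg_lt h1, coeff_monomial_one_of_deg_lt h1, zero_mul, zero_mul]
  rw [h p.1 (not_lt.mp h1), h' p.2 (not_lt.mp h2)]

lemma EqUpToDeg.pow_monomial {γ : MIdx} {π : FPS} (h : EqUpToDeg α (deg α γ) π (monomial γ 1))
    (n : ℕ) : EqUpToDeg α (deg α (n • γ)) (π ^ n) (monomial (n • γ) 1) := by
  induction n with
  | zero => rw [zero_smul, pow_zero, monomial_zero_one]; exact fun _ _ => rfl
  | succ n ih => rw [succ_nsmul, pow_succ]; exact ih.mul_monomial h

lemma eqUpToDeg_map_monomial (φ : FPS →+* FPS)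
    (hX : ∀ v, EqUpToDeg α (deg α (Finsupp.single v 1)) (φ (X v)) (monomial (Finsupp.single v 1) 1))
    (γ : MIdx) : EqUpToDeg α (deg α γ) (φ (monomial γ 1)) (monomial γ 1) := by
  induction γ using Finsupp.induction_linear with
  | zero => rw [monomial_zero_one, map_one]; exact fun _ _ => rfl
  | add f g hf hg =>
    have := hf.mul_monomial hg
    rwa [← map_mul, monomial_mul_monomial, mul_one] at this
  | single v b =>
    have := (hX v).pow_monomial b
    rwa [Finsupp.smul_single_one, ← map_pow, X_pow_eq] at this

end EqUpToDeg

section Matrices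

variable {Γ A B : MIdx → MIdx → ℝ}

def idMat : MIdx → MIdx → ℝ := fun β γ => if β = γ then 1 else 0

def mulMat (A B : MIdx → MIdx → ℝ) : MIdx → MIdx → ℝ := fun β γ => ∑ᶠ δ, A β δ * B δ γ

lemma coeff_applyG (Γ : MIdx → MIdx → ℝ) (π : FPS) (β : MIdx) :
    coeff β (applyG Γ π) = ∑ᶠ γ, Γ β γ * coeff γ π := rfl

lemma coeff_applyG_monomial (Γ : MIdx → MIdx → ℝ) (β γ : MIdx) :
    coeff β (applyG Γ (monomial γ 1)) = Γ β γ := by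
  classical
  rw [coeff_applyG, finsum_eq_single _ γ fun δ hδ => by rw [coeff_monomial, if_neg hδ, mul_zero],
    coeff_monomial_same, mul_one]

lemma idMat_eq_coeff_monomial (β γ : MIdx) : idMat β γ = coeff β (monomial γ (1 : ℝ)) := by
  classical
  rw [coeff_monomial]; rfl

lemma applyG_idMat (π : FPS) : applyG idMat π = π := by
  ext β
  rw [coeff_applyG, finsum_eq_single _ β fun δ hδ => by rw [idMat, if_neg hδ.symm, zero_mul]]
  rw [idMat, if_pos rfl, one_mul]

lemma idMat_mulMat (A : MIdx → MIdx → ℝ) : mulMat idMat A = A := by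
  ext β γ
  rw [mulMat, finsum_eq_single _ β fun δ hδ => by rw [idMat, if_neg hδ.symm, zero_mul]]
  rw [idMat, if_pos rfl, one_mul]

lemma exists_ne_zero_of_finsum_ne_zero {ι M : Type*} [AddCommMonoid M] {f : ι → M}
    (h : ∑ᶠ i, f i ≠ 0) : ∃ i, f i ≠ 0 := by
  by_contra! hf
  exact h (finsum_eq_zero_of_forall_eq_zero hf)

lemma RowFinite.finite_support_mul (hA : RowFinite A) (β : MIdx) (f : MIdx → ℝ) :
    (Function.support fun δ => A β δ * f δ).Finite :=
  (hA β).subset fun _ hδ => left_ne_zero_of_mul hδ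

lemma RowFinite.finsum_eq_sum (hA : RowFinite A) (β : MIdx) (f : MIdx → ℝ) :
    ∑ᶠ δ, A β δ * f δ = ∑ δ ∈ (hA β).toFinset, A β δ * f δ :=
  finsum_eq_finsetSum_of_support_subset _ fun _ hδ =>
    (hA β).mem_toFinset.mpr (left_ne_zero_of_mul hδ)

lemma rowFinite_idMat : RowFinite idMat := fun β =>
  (Set.finite_singleton β).subset fun γ hγ => by
    by_contra h
    exact hγ (if_neg (Ne.symm h))

lemma RowFinite.sub (hA : RowFinite A) (hB : RowFinite B) : RowFinite (A - B) := fun β =>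
  ((hA β).union (hB β)).subset fun γ hγ => by
    by_contra h
    simp only [Set.mem_union, Set.mem_ofPred_eq, not_or, not_not] at h
    exact hγ (by simp [h.1, h.2])

lemma RowFinite.mulMat (hA : RowFinite A) (hB : RowFinite B) : RowFinite (mulMat A B) :=
  fun β => ((hA β).biUnion fun δ _ => hB δ).subset fun γ hγ => by
    obtain ⟨δ, hδ⟩ := exists_ne_zero_of_finsum_ne_zero hγ
    exact Set.mem_biUnion (left_ne_zero_of_mul hδ) (right_ne_zero_of_mul hδ)

lemma mulMat_add_left (hA : RowFinite A) (hB : RowFinite B) (C : MIdx → MIdx → ℝ) :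
    mulMat (A + B) C = mulMat A C + mulMat B C := by
  ext β γ
  simp only [mulMat, Pi.add_apply, add_mul]
  exact finsum_add_distrib (hA.finite_support_mul β _) (hB.finite_support_mul β _)

lemma applyG_mulMat (hA : RowFinite A) (hB : RowFinite B) (π : FPS) :
    applyG (mulMat A B) π = applyG A (applyG B π) := by
  ext β
  calc coeff β (applyG (mulMat A B) π)
      = ∑ᶠ γ, ∑ᶠ δ, A β δ * (B δ γ * coeff γ π) := by
        simp only [coeff_applyG, mulMat, finsum_mul, mul_assoc]
    _ = ∑ᶠ γ, ∑ δ ∈ (hA β).toFinset, A β δ * (B δ γ * coeff γ π) := by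
        simp only [hA.finsum_eq_sum]
    _ = ∑ δ ∈ (hA β).toFinset, A β δ * ∑ᶠ γ, B δ γ * coeff γ π := by
        rw [finsum_sum_comm _ _ fun δ _ => (hB δ).subset fun γ hγ =>
          left_ne_zero_of_mul (right_ne_zero_of_mul hγ)]
        simp only [mul_finsum]
    _ = coeff β (applyG A (applyG B π)) := by
        rw [coeff_applyG, hA.finsum_eq_sum]; rfl

def RowFinite.toLinearMap (hΓ : RowFinite Γ) : FPS →ₗ[ℝ] FPS where
  toFun := applyG Γ
  map_add' π π' := by
    ext β
    simp only [coeff_applyG, map_add, mul_add]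
    exact finsum_add_distrib (hΓ.finite_support_mul β _) (hΓ.finite_support_mul β _)
  map_smul' c π := by
    ext β
    simp only [coeff_applyG, map_smul, smul_eq_mul, RingHom.id_apply, mul_finsum]
    exact finsum_congr fun _ => by ring

@[simp]
lemma RowFinite.toLinearMap_apply (hΓ : RowFinite Γ) (π : FPS) :
    hΓ.toLinearMap π = applyG Γ π := rfl

end Matrices

section Unitriangular

variable {α D : ℝ} {Γ A : MIdx → MIdx → ℝ}

def IsUnitriangular (α : ℝ) (Γ : MIdx → MIdx → ℝ) : Prop :=
  ∀ β γ, Γ β γ ≠ idMat β γ → deg α γ < deg α β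

lemma isUnitriangular_of_eqUpToDeg
    (h : ∀ γ, EqUpToDeg α (deg α γ) (applyG Γ (monomial γ 1)) (monomial γ 1)) :
    IsUnitriangular α Γ := fun β γ hne => not_le.mp fun hle =>
  hne (by rw [← coeff_applyG_monomial Γ β γ, h γ β hle, idMat_eq_coeff_monomial])

lemma IsUnitriangular.apply_self (h : IsUnitriangular α Γ) (β : MIdx) : Γ β β = 1 := by
  by_contra hne
  exact (h β β (by rwa [idMat, if_pos rfl])).false

lemma IsUnitriangular.deg_le (h : IsUnitriangular α Γ) {β γ : MIdx} (hβγ : Γ β γ ≠ 0) :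
    deg α γ ≤ deg α β := by
  by_cases hid : Γ β γ = idMat β γ
  · obtain rfl : β = γ := by
      by_contra hne
      rw [idMat, if_neg hne] at hid
      exact hβγ hid
    exact le_rfl
  · exact (h β γ hid).le

lemma IsUnitriangular.eqUpToDeg_applyG (h : IsUnitriangular α Γ) {π π' : FPS}
    (hπ : EqUpToDeg α D π π') : EqUpToDeg α D (applyG Γ π) (applyG Γ π') := fun β hβ => by
  rw [coeff_applyG, coeff_applyG]
  refine finsum_congr fun γ => ?_
  by_cases hγ : Γ β γ = 0
  · rw [hγ, zero_mul, zero_mul]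
  · rw [hπ γ ((h.deg_le hγ).trans hβ)]

/-- A coefficient of `applyG Γ π` of minimal degree is the corresponding coefficient of `π`. -/
lemma IsUnitriangular.applyG_injective (hα0 : 0 < α) (hα1 : α < 1) (hΓ : RowFinite Γ)
    (h : IsUnitriangular α Γ) : Function.Injective (applyG Γ) := by
  refine (injective_iff_map_eq_zero hΓ.toLinearMap).mpr fun π hπ => ?_
  ext β
  induction β using (measure (degRank α)).wf.induction with
  | h β ih =>
    have hβ := congr_arg (coeff β) hπ
    rwa [RowFinite.toLinearMap_apply, coeff_applyG, finsum_eq_single _ β, h.apply_self, one_mul,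
      map_zero] at hβ
    intro γ hγ
    by_cases hΓ0 : Γ β γ = 0
    · rw [hΓ0, zero_mul]
    · have hlt := h β γ (by rwa [idMat, if_neg hγ.symm])
      rw [ih γ ((degRank_lt_degRank_iff hα0 hα1).mpr hlt), map_zero, mul_zero]

def powMat (A : MIdx → MIdx → ℝ) : ℕ → MIdx → MIdx → ℝ
  | 0 => idMat
  | j + 1 => mulMat A (powMat A j)

lemma RowFinite.powMat (hA : RowFinite A) (j : ℕ) : RowFinite (powMat A j) := by
  induction j with
  | zero => exact rowFinite_idMat
  | succ j ih => exact hA.mulMat ih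

lemma degRank_add_le_of_powMat_ne_zero (hα0 : 0 < α) (hα1 : α < 1)
    (hA : ∀ β γ, A β γ ≠ 0 → deg α γ < deg α β) {j : ℕ} {β γ : MIdx}
    (h : powMat A j β γ ≠ 0) : degRank α γ + j ≤ degRank α β := by
  induction j generalizing β with
  | zero =>
    obtain rfl : β = γ := by
      by_contra hne
      exact h (if_neg hne)
    exact le_rfl
  | succ j ih =>
    obtain ⟨δ, hδ⟩ := exists_ne_zero_of_finsum_ne_zero h
    have h1 := (degRank_lt_degRank_iff hα0 hα1).mpr (hA β δ (left_ne_zero_of_mul hδ))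
    have h2 := ih (right_ne_zero_of_mul hδ)
    omega

lemma powMat_eq_zero_of_degRank_lt (hα0 : 0 < α) (hα1 : α < 1)
    (hA : ∀ β γ, A β γ ≠ 0 → deg α γ < deg α β) {j : ℕ} {β : MIdx} (hj : degRank α β < j)
    (γ : MIdx) : powMat A j β γ = 0 := by
  by_contra h
  have := degRank_add_le_of_powMat_ne_zero hα0 hα1 hA h
  omega

lemma IsUnitriangular.deg_lt_of_sub_idMat_ne_zero (h : IsUnitriangular α Γ) (β γ : MIdx)
    (hβγ : (Γ - idMat) β γ ≠ 0) : deg α γ < deg α β :=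
  h β γ (sub_ne_zero.mp hβγ)

/-- Row `β` of the Neumann series `Σ_j (id - Γ)^j`, which is a finite sum since `(Γ - id)^j`
vanishes on row `β` once `j > degRank α β`. -/
def neumannInv (α : ℝ) (Γ : MIdx → MIdx → ℝ) : MIdx → MIdx → ℝ := fun β γ =>
  ∑ j ∈ range (degRank α β + 1), (-1) ^ j * powMat (Γ - idMat) j β γ

lemma IsUnitriangular.neumannInv_eq_sum (hα0 : 0 < α) (hα1 : α < 1) (h : IsUnitriangular α Γ)
    {β : MIdx} {K : ℕ} (hK : degRank α β < K) (γ : MIdx) :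
    neumannInv α Γ β γ = ∑ j ∈ range K, (-1) ^ j * powMat (Γ - idMat) j β γ := by
  refine Finset.sum_subset (range_subset_range.mpr hK) fun j _ hj => ?_
  rw [mem_range, Nat.lt_succ_iff, not_le] at hj
  rw [powMat_eq_zero_of_degRank_lt hα0 hα1 h.deg_lt_of_sub_idMat_ne_zero hj, mul_zero]

lemma RowFinite.neumannInv (hΓ : RowFinite Γ) : RowFinite (neumannInv α Γ) := fun β =>
  ((finite_toSet (range (degRank α β + 1))).biUnion
    fun j _ => (hΓ.sub rowFinite_idMat).powMat j β).subset fun γ hγ => by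
      obtain ⟨j, hj, hne⟩ := Finset.exists_ne_zero_of_sum_ne_zero hγ
      exact Set.mem_biUnion hj (right_ne_zero_of_mul hne)

lemma isUnitriangular_neumannInv (hα0 : 0 < α) (hα1 : α < 1) (h : IsUnitriangular α Γ) :
    IsUnitriangular α (neumannInv α Γ) := fun β γ hne => by
  rw [neumannInv, sum_range_succ', pow_zero, one_mul, powMat] at hne
  obtain ⟨j, -, hj⟩ := Finset.exists_ne_zero_of_sum_ne_zero fun h0 => hne (by rw [h0, zero_add])
  have := degRank_add_le_of_powMat_ne_zero hα0 hα1 h.deg_lt_of_sub_idMat_ne_zero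
    (right_ne_zero_of_mul hj)
  exact (degRank_lt_degRank_iff hα0 hα1).mp (by omega)

lemma IsUnitriangular.mulMat_neumannInv (hα0 : 0 < α) (hα1 : α < 1) (hΓ : RowFinite Γ)
    (h : IsUnitriangular α Γ) : mulMat Γ (neumannInv α Γ) = idMat := by
  funext β γ
  set N := Γ - idMat
  set K := degRank α β + 1
  have hstep : ∀ j, mulMat Γ (powMat N j) = powMat N j + powMat N (j + 1) := fun j => by
    conv_lhs => rw [← add_sub_cancel idMat Γ]
    rw [mulMat_add_left rowFinite_idMat (hΓ.sub rowFinite_idMat), idMat_mulMat]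
    rfl
  calc mulMat Γ (neumannInv α Γ) β γ
      = ∑ᶠ δ, ∑ j ∈ range K, Γ β δ * ((-1) ^ j * powMat N j δ γ) := by
        refine finsum_congr fun δ => ?_
        rw [← Finset.mul_sum]
        by_cases hδ : Γ β δ = 0
        · rw [hδ, zero_mul, zero_mul]
        · rw [h.neumannInv_eq_sum hα0 hα1 (Nat.lt_succ_of_le
            ((degRank_le_degRank_iff hα0 hα1).mpr (h.deg_le hδ)))]
    _ = ∑ j ∈ range K, (-1) ^ j * mulMat Γ (powMat N j) β γ := by
        rw [finsum_sum_comm _ _ fun j _ => hΓ.finite_support_mul β _]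
        simp only [mulMat, mul_finsum, mul_left_comm]
    _ = ∑ j ∈ range K, ((-1) ^ j * powMat N j β γ - (-1) ^ (j + 1) * powMat N (j + 1) β γ) := by
        refine Finset.sum_congr rfl fun j _ => ?_
        rw [hstep, Pi.add_apply, Pi.add_apply, pow_succ]
        ring
    _ = idMat β γ := by
        rw [sum_range_sub', powMat_eq_zero_of_degRank_lt hα0 hα1 h.deg_lt_of_sub_idMat_ne_zero
          (Nat.lt_succ_self _), mul_zero, sub_zero, pow_zero, one_mul]
        rfl

lemma IsUnitriangular.applyG_applyG_neumannInv (hα0 : 0 < α) (hα1 : α < 1) (hΓ : RowFinite Γ)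
    (h : IsUnitriangular α Γ) (π : FPS) : applyG Γ (applyG (neumannInv α Γ) π) = π := by
  rw [← applyG_mulMat hΓ hΓ.neumannInv, h.mulMat_neumannInv hα0 hα1 hΓ, applyG_idMat]

lemma IsUnitriangular.applyG_neumannInv_applyG (hα0 : 0 < α) (hα1 : α < 1) (hΓ : RowFinite Γ)
    (h : IsUnitriangular α Γ) (π : FPS) : applyG (neumannInv α Γ) (applyG Γ π) = π :=
  h.applyG_injective hα0 hα1 hΓ (h.applyG_applyG_neumannInv hα0 hα1 hΓ _)

end Unitriangular

section Binomial

def shiftTrunc {R : Type*} [Semiring R] (q : R) (z : ℕ → R) (m T : ℕ) : R :=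
  ∑ j ∈ range (T + 1), (m + j).choose m • (q ^ j * z (m + j))

lemma sum_range_neg_one_pow_mul_choose_mul_choose (k s : ℕ) :
    ∑ l ∈ range (s + 1), (-1 : ℤ) ^ l * ((k + l).choose k * (k + s).choose (k + l))
      = if s = 0 then 1 else 0 := by
  calc ∑ l ∈ range (s + 1), (-1 : ℤ) ^ l * ((k + l).choose k * (k + s).choose (k + l))
      = (k + s).choose k * ∑ l ∈ range (s + 1), (-1 : ℤ) ^ l * s.choose l := by
        rw [Finset.mul_sum]
        refine Finset.sum_congr rfl fun l hl => ?_
        have hls : l ≤ s := Nat.lt_succ_iff.mp (mem_range.mp hl)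
        have := Nat.choose_mul (n := k + s) (k := k + l) (s := k) (by omega)
        rw [show k + s - k = s by omega, show k + l - k = l by omega] at this
        rw [mul_comm ((k + l).choose k : ℤ), ← Nat.cast_mul, this, Nat.cast_mul]
        ring
    _ = if s = 0 then 1 else 0 := by
        rw [Int.alternating_sum_range_choose]
        split_ifs <;> simp_all

/-- Shifting `z_k ↦ Σ_l C(k+l, k) q^l z_{k+l}` by `q` and then by `-q` is the identity; with these
truncations the identity is exact. -/
lemma sum_choose_nsmul_neg_pow_mul_shiftTrunc {R : Type*} [CommRing R] (q : R) (z : ℕ → R)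
    (k T : ℕ) :
    ∑ l ∈ range (T + 1), (k + l).choose k • ((-q) ^ l * shiftTrunc q z (k + l) (T - l)) = z k := by
  set f : ℕ → ℕ → R := fun l j =>
    ((-1 : ℤ) ^ l * ((k + l).choose k * (k + l + j).choose (k + l))) • (q ^ (l + j) * z (k + l + j))
  calc ∑ l ∈ range (T + 1), (k + l).choose k • ((-q) ^ l * shiftTrunc q z (k + l) (T - l))
      = ∑ l ∈ range (T + 1), ∑ j ∈ range (T + 1 - l), f l j := by
        refine Finset.sum_congr rfl fun l hl => ?_
        rw [shiftTrunc, show T - l + 1 = T + 1 - l by have := mem_range.mp hl; omega,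
          Finset.mul_sum, Finset.smul_sum]
        refine Finset.sum_congr rfl fun j _ => ?_
        simp only [f, nsmul_eq_mul, zsmul_eq_mul, neg_pow q, pow_add]
        push_cast
        ring
    _ = ∑ s ∈ range (T + 1), ∑ l ∈ range (s + 1), f l (s - l) := (sum_range_diag_flip _ _).symm
    _ = ∑ s ∈ range (T + 1), (if s = 0 then 1 else 0 : ℤ) • (q ^ s * z (k + s)) := by
        refine Finset.sum_congr rfl fun s _ => ?_
        rw [← sum_range_neg_one_pow_mul_choose_mul_choose k s, Finset.sum_smul]
        refine Finset.sum_congr rfl fun l hl => ?_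
        have hls : l ≤ s := Nat.lt_succ_iff.mp (mem_range.mp hl)
        simp only [f, show l + (s - l) = s by omega, show k + l + (s - l) = k + s by omega]
    _ = z k := by
        rw [Finset.sum_eq_single_of_mem 0 (by simp) fun s _ hs => by rw [if_neg hs, zero_smul]]
        simp

end Binomial

section ReExpansion

variable {α : ℝ} {pin : ℕ × ℕ → FPS} {Γ : MIdx → MIdx → ℝ}

def IsReExpansion.toAlgHom (h : IsReExpansion pin Γ) : FPS →ₐ[ℝ] FPS :=
  AlgHom.ofLinearMap h.1.toLinearMap h.2.2.1 h.2.1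

@[simp]
lemma IsReExpansion.toAlgHom_apply (h : IsReExpansion pin Γ) (π : FPS) :
    h.toAlgHom π = applyG Γ π := rfl

lemma le_deg_of_coeff_mul_zk_ne_zero (hα0 : 0 < α) (hα1 : α < 1) {ρ : FPS} {m : ℕ} {β : MIdx}
    (h : coeff β (ρ * zk m) ≠ 0) : α * m ≤ deg α β := by
  classical
  rw [zk, X_def, coeff_mul_monomial] at h
  split_ifs at h with hle
  · rw [← tsub_add_cancel_of_le hle, map_add, deg_single_one]
    exact le_add_of_nonneg_left (deg_nonneg hα0 hα1 _)
  · exact absurd rfl h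

lemma eqUpToDeg_gammaZk_shiftTrunc (hα0 : 0 < α) (hα1 : α < 1) (q : FPS) {m T : ℕ} {D : ℝ}
    (hD : D < α * (m + T + 1)) : EqUpToDeg α D (gammaZk q m) (shiftTrunc q zk m T) := by
  intro β hβ
  rw [shiftTrunc, map_sum]
  refine (finsum_eq_sum_of_support_subset _ fun l hl => ?_).trans
    (Finset.sum_congr rfl fun l _ => by rw [map_nsmul, nsmul_eq_mul])
  have := le_deg_of_coeff_mul_zk_ne_zero hα0 hα1 (right_ne_zero_of_mul hl)
  rw [coe_range, Set.mem_Iio]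
  by_contra! hlT
  have hlT : (T : ℝ) + 1 ≤ l := by exact_mod_cast hlT
  push_cast at this
  nlinarith

lemma IsReExpansion.eqUpToDeg_applyG_X (hα0 : 0 < α) (hα1 : α < 1) (hpop : PopCond α pin)
    (h : IsReExpansion pin Γ) (v : Var) :
    EqUpToDeg α (deg α (Finsupp.single v 1)) (applyG Γ (X v))
      (monomial (Finsupp.single v 1) 1) := by
  rcases v with k | n
  · have := eqUpToDeg_gammaZk_shiftTrunc hα0 hα1 (pin (0, 0)) (m := k) (T := 0)
      (D := deg α (Finsupp.single (.inl k) 1))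
      (by rw [deg_single_one, degWeight]; push_cast; linarith)
    simpa [shiftTrunc, ← h.2.2.2.1, zk, X_def] using this
  · intro β hβ
    rw [← zn, h.2.2.2.2 n, map_add, zn, X_def, add_eq_left]
    by_contra hne
    have := hpop n.val β hne
    rw [hom_eq_add_deg] at this
    rw [deg_single_one, degWeight] at hβ
    linarith

lemma IsReExpansion.isUnitriangular (hα0 : 0 < α) (hα1 : α < 1) (hpop : PopCond α pin)
    (h : IsReExpansion pin Γ) : IsUnitriangular α Γ :=
  isUnitriangular_of_eqUpToDeg <|
    eqUpToDeg_map_monomial h.toAlgHom.toRingHom (h.eqUpToDeg_applyG_X hα0 hα1 hpop)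

lemma IsReExpansion.applyG_gammaZk (hα0 : 0 < α) (hα1 : α < 1) (h : IsReExpansion pin Γ)
    (htri : IsUnitriangular α Γ) {x : FPS} (hx : applyG Γ x = -pin (0, 0)) (k : ℕ) :
    applyG Γ (gammaZk x k) = zk k := by
  ext β
  set q := pin (0, 0)
  set T := ⌊deg α β / α⌋₊
  have hT : deg α β < α * (k + T + 1) := by
    have := (div_lt_iff₀' hα0).mp (Nat.lt_floor_add_one (deg α β / α))
    nlinarith [(k.cast_nonneg : (0 : ℝ) ≤ k)]
  calc coeff β (applyG Γ (gammaZk x k))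
      = coeff β (applyG Γ (shiftTrunc x zk k T)) :=
        htri.eqUpToDeg_applyG (eqUpToDeg_gammaZk_shiftTrunc hα0 hα1 x hT) β le_rfl
    _ = ∑ l ∈ range (T + 1), (k + l).choose k • coeff β ((-q) ^ l * gammaZk q (k + l)) := by
        rw [← h.toAlgHom_apply, shiftTrunc, map_sum, map_sum]
        refine Finset.sum_congr rfl fun l _ => ?_
        rw [map_nsmul, map_nsmul, map_mul, map_pow, h.toAlgHom_apply, h.toAlgHom_apply, hx,
          h.2.2.2.1]
    _ = ∑ l ∈ range (T + 1), (k + l).choose k •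
          coeff β ((-q) ^ l * shiftTrunc q zk (k + l) (T - l)) := by
        refine Finset.sum_congr rfl fun l hl => ?_
        have hlT : l ≤ T := Nat.lt_succ_iff.mp (mem_range.mp hl)
        have hD : deg α β < α * ((k + l : ℕ) + (T - l : ℕ) + 1) := by
          rwa [show ((k + l : ℕ) : ℝ) + (T - l : ℕ) = k + T by push_cast [hlT]; ring]
        rw [((eqUpToDeg_gammaZk_shiftTrunc hα0 hα1 _ hD).mul_left hα0 hα1 _) β le_rfl]
    _ = coeff β (zk k) := by
        rw [← sum_choose_nsmul_neg_pow_mul_shiftTrunc q zk k T, map_sum]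
        simp only [map_nsmul]

end ReExpansion

section Inverse

variable {α : ℝ} {pin : ℕ × ℕ → FPS} {Γ : MIdx → MIdx → ℝ}

/-- Forced by `Γ̃* z_n = z_n + π̃⁽ⁿ⁾` for `n ≠ 0`, and by `Γ*(π̃⁽⁰⁾) = -π⁽⁰⁾` for `n = 0`. -/
def inverseFamily (α : ℝ) (pin : ℕ × ℕ → FPS) (Γ : MIdx → MIdx → ℝ) : ℕ × ℕ → FPS := fun n =>
  if hn : n = (0, 0) then -applyG (neumannInv α Γ) (pin (0, 0))
  else applyG (neumannInv α Γ) (zn ⟨n, hn⟩) - zn ⟨n, hn⟩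

lemma IsReExpansion.applyG_inverseFamily (hα0 : 0 < α) (hα1 : α < 1) (hpop : PopCond α pin)
    (h : IsReExpansion pin Γ) (n : ℕ × ℕ) : applyG Γ (inverseFamily α pin Γ n) = -pin n := by
  have hinv := (h.isUnitriangular hα0 hα1 hpop).applyG_applyG_neumannInv hα0 hα1 h.1
  rw [inverseFamily]
  split_ifs with hn
  · rw [← h.toAlgHom_apply, map_neg, h.toAlgHom_apply, hinv, hn]
  · rw [← h.toAlgHom_apply, map_sub, h.toAlgHom_apply, h.toAlgHom_apply, hinv, h.2.2.2.2]
    ring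

lemma IsReExpansion.popCond_inverseFamily (hα0 : 0 < α) (hα1 : α < 1) (hpop : PopCond α pin)
    (h : IsReExpansion pin Γ) : PopCond α (inverseFamily α pin Γ) := by
  classical
  intro n β hβ
  rw [hom_eq_add_deg]
  by_cases hn : n = (0, 0)
  · subst hn
    simpa using add_pos_of_pos_of_nonneg hα0 (deg_nonneg hα0 hα1 β)
  · rw [inverseFamily, dif_neg hn, map_sub, zn, X_def, coeff_applyG_monomial, coeff_monomial,
      sub_ne_zero] at hβ
    have := isUnitriangular_neumannInv hα0 hα1 (h.isUnitriangular hα0 hα1 hpop) β _ hβ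
    rw [deg_single_one, degWeight] at this
    linarith

lemma IsReExpansion.isReExpansion_inverseFamily (hα0 : 0 < α) (hα1 : α < 1)
    (hpop : PopCond α pin) (h : IsReExpansion pin Γ) :
    IsReExpansion (inverseFamily α pin Γ) (neumannInv α Γ) := by
  have htri := h.isUnitriangular hα0 hα1 hpop
  have hinv := htri.applyG_applyG_neumannInv hα0 hα1 h.1
  have hinj := htri.applyG_injective hα0 hα1 h.1
  refine ⟨h.1.neumannInv, fun π π' => hinj ?_, hinj ?_, fun k => hinj ?_, fun n => ?_⟩
  · rw [h.2.1, hinv, hinv, hinv]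
  · rw [hinv, h.2.2.1]
  · rw [hinv, h.applyG_gammaZk hα0 hα1 htri (h.applyG_inverseFamily hα0 hα1 hpop (0, 0))]
  · rw [inverseFamily, dif_neg n.2]
    abel

end Inverse

/-- Existence of inverses (second part of Lemma 7.2): there is a family `{π̃⁽ⁿ⁾}`
satisfying the population condition with `Γ*(π̃⁽ⁿ⁾) = −π⁽ⁿ⁾` for all `n`, whose
associated re-expansion map is a two-sided inverse of `Γ*`. -/
theorem stmt_15 (α : ℝ) (hα0 : 0 < α) (hα1 : α < 1)
    (pin : ℕ × ℕ → FPS) (hpop : PopCond α pin)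
    (Γ : MIdx → MIdx → ℝ) (hΓ : IsReExpansion pin Γ) :
    ∃ pint : ℕ × ℕ → FPS, PopCond α pint ∧
      (∀ n : ℕ × ℕ, applyG Γ (pint n) = -(pin n)) ∧
      ∃ Γt : MIdx → MIdx → ℝ, IsReExpansion pint Γt ∧
        (∀ π : FPS, applyG Γ (applyG Γt π) = π) ∧
        (∀ π : FPS, applyG Γt (applyG Γ π) = π) := by
  have htri := hΓ.isUnitriangular hα0 hα1 hpop
  exact ⟨inverseFamily α pin Γ, hΓ.popCond_inverseFamily hα0 hα1 hpop,
    hΓ.applyG_inverseFamily hα0 hα1 hpop, neumannInv α Γ,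
    hΓ.isReExpansion_inverseFamily hα0 hα1 hpop, htri.applyG_applyG_neumannInv hα0 hα1 hΓ.1,
    htri.applyG_neumannInv_applyG hα0 hα1 hΓ.1⟩
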